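/- Let u* = √(π/2) and J_σ(u) = argmax_v v·Φ((u−v)/σ) with Φ the standard Gaussian CDF. For σ ∈ (1/2,1), |J_σ(u*) − u*| ≥ (2/5)(1 − σ). -/

import Mathlib

noncomputable def gaussPDF (ω : ℝ) : ℝ :=
  (Real.sqrt (2 * Real.pi))⁻¹ * Real.exp (-ω ^ 2 / 2)

noncomputable def gaussCDF (ω : ℝ) : ℝ := ∫ t in Set.Iic ω, gaussPDF t

/-!
The function `F v = v Φ((u* - v)/σ)` has derivative `Φ(x) - (v/σ) φ(x)` at `v`, where
`x = (u* - v)/σ`. Since `√(2π) = 2u*`, at `v = u*` this equals `1/2 - 1/(2σ) < 0`, and the crude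
bounds `Φ(x) ≤ 1/2 + max x 0 / (2u*)` and `φ(x) ≥ (1 - x²/2)/(2u*)` keep it negative as long as
`|v - u*| < (2/5)(1 - σ)`. The maximiser `J σ u*` is a critical point of `F`, so it lies outside
that window.
-/

open MeasureTheory Real Set

lemma gaussPDF_eq_gaussianPDFReal : gaussPDF = ProbabilityTheory.gaussianPDFReal 0 1 := by
  ext x
  simp [gaussPDF, ProbabilityTheory.gaussianPDFReal]

lemma integrable_gaussPDF : Integrable gaussPDF :=
  gaussPDF_eq_gaussianPDFReal ▸ ProbabilityTheory.integrable_gaussianPDFReal 0 1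

lemma continuous_gaussPDF : Continuous gaussPDF := by
  unfold gaussPDF
  fun_prop

lemma gaussPDF_pos (x : ℝ) : 0 < gaussPDF x := by
  unfold gaussPDF
  positivity

lemma gaussPDF_neg (x : ℝ) : gaussPDF (-x) = gaussPDF x := by
  simp [gaussPDF]

lemma gaussPDF_le (x : ℝ) : gaussPDF x ≤ (√(2 * π))⁻¹ := by
  unfold gaussPDF
  refine mul_le_of_le_one_right (by positivity) (exp_le_one_iff.2 ?_)
  nlinarith [sq_nonneg x]

lemma one_sub_sq_div_two_le_gaussPDF_mul (x : ℝ) : 1 - x ^ 2 / 2 ≤ √(2 * π) * gaussPDF x := by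
  have : √(2 * π) ≠ 0 := by positivity
  rw [gaussPDF, mul_inv_cancel_left₀ this]
  linarith [add_one_le_exp (-x ^ 2 / 2)]

lemma gaussCDF_zero : gaussCDF 0 = 1 / 2 := by
  have hsymm : gaussCDF 0 = ∫ t in Ioi 0, gaussPDF t := by
    simpa only [gaussCDF, gaussPDF_neg, neg_zero] using integral_comp_neg_Iic 0 gaussPDF
  have htotal : gaussCDF 0 + ∫ t in Ioi 0, gaussPDF t = 1 := by
    rw [gaussCDF, intervalIntegral.integral_Iic_add_Ioi integrable_gaussPDF.integrableOn
      integrable_gaussPDF.integrableOn, gaussPDF_eq_gaussianPDFReal,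
      ProbabilityTheory.integral_gaussianPDFReal_eq_one 0 one_ne_zero]
  linarith

lemma gaussCDF_eq_half_add (x : ℝ) : gaussCDF x = 1 / 2 + ∫ t in (0 : ℝ)..x, gaussPDF t := by
  rw [← gaussCDF_zero, gaussCDF, gaussCDF, ← intervalIntegral.integral_Iic_sub_Iic
    integrable_gaussPDF.integrableOn integrable_gaussPDF.integrableOn]
  ring

lemma hasDerivAt_gaussCDF (x : ℝ) : HasDerivAt gaussCDF (gaussPDF x) x := by
  have := intervalIntegral.integral_hasDerivAt_right (continuous_gaussPDF.intervalIntegrable 0 x)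
    (continuous_gaussPDF.stronglyMeasurableAtFilter _ _) continuous_gaussPDF.continuousAt
  rw [show gaussCDF = fun y => 1 / 2 + ∫ t in (0 : ℝ)..y, gaussPDF t from
    funext gaussCDF_eq_half_add]
  exact this.const_add (1 / 2)

lemma gaussCDF_le_half_add_max (x : ℝ) : gaussCDF x ≤ 1 / 2 + max x 0 / √(2 * π) := by
  rw [gaussCDF_eq_half_add]
  rcases le_total x 0 with hx | hx
  · rw [max_eq_right hx, zero_div, intervalIntegral.integral_symm]
    linarith [intervalIntegral.integral_nonneg (μ := volume) hx fun t _ => (gaussPDF_pos t).le]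
  · have := intervalIntegral.integral_mono_on (μ := volume) hx
      (continuous_gaussPDF.intervalIntegrable 0 x) intervalIntegrable_const
      fun t _ => gaussPDF_le t
    rw [intervalIntegral.integral_const, smul_eq_mul, sub_zero, ← div_eq_mul_inv] at this
    rw [max_eq_left hx]
    linarith

lemma hasDerivAt_mul_gaussCDF (u σ v : ℝ) :
    HasDerivAt (fun w => w * gaussCDF ((u - w) / σ))
      (gaussCDF ((u - v) / σ) - v / σ * gaussPDF ((u - v) / σ)) v := by
  have hinner : HasDerivAt (fun w => (u - w) / σ) (-1 / σ) v :=
    ((hasDerivAt_id v).const_sub u).div_const σ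
  exact ((hasDerivAt_id' v).mul ((hasDerivAt_gaussCDF _).comp v hinner)).congr_deriv
    (by simp only [Function.comp_apply]; ring)

lemma sqrt_two_mul_pi : √(2 * π) = 2 * √(π / 2) := by
  rw [show 2 * π = 2 ^ 2 * (π / 2) by ring, sqrt_mul (by positivity), sqrt_sq zero_le_two]

lemma one_le_sqrt_pi_div_two : 1 ≤ √(π / 2) :=
  one_le_sqrt.2 <| (one_le_div two_pos).2 (by linarith [pi_gt_three])

lemma mul_add_max_lt {u σ x : ℝ} (hu : 1 ≤ u) (hσ₁ : 1 / 2 < σ) (hσ₂ : σ < 1)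
    (hx : |σ * x| < 2 / 5 * (1 - σ)) :
    σ * (u + max x 0) < (u - σ * x) * (1 - x ^ 2 / 2) := by
  obtain ⟨hx₁, hx₂⟩ := abs_lt.1 hx
  have hx_abs : |x| < 4 / 5 * (1 - σ) := by
    rw [abs_lt]; constructor <;> nlinarith
  have hx_sq : x ^ 2 < 8 / 25 * (1 - σ) := by
    rw [← sq_abs]; nlinarith [abs_nonneg x]
  rcases le_or_gt x 0 with hx0 | hx0
  · rw [max_eq_right hx0]
    nlinarith [mul_nonneg (by nlinarith : 0 ≤ -(σ * x)) (by nlinarith : (0 : ℝ) ≤ 1 - x ^ 2 / 2)]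
  · rw [max_eq_left hx0.le]
    nlinarith [mul_nonneg (by nlinarith : 0 ≤ σ * x) (sq_nonneg x),
      mul_lt_mul_of_pos_left hx_sq (by linarith : 0 < u),
      mul_nonneg (by linarith : 0 ≤ 1 - σ) (by linarith : 0 ≤ 21 / 25 * u - 4 / 5)]

lemma gaussCDF_lt_div_mul_gaussPDF {σ v : ℝ} (hσ₁ : 1 / 2 < σ) (hσ₂ : σ < 1)
    (hv : |v - √(π / 2)| < 2 / 5 * (1 - σ)) :
    gaussCDF ((√(π / 2) - v) / σ) < v / σ * gaussPDF ((√(π / 2) - v) / σ) := by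
  set u := √(π / 2)
  set x := (u - v) / σ
  have hσ : 0 < σ := by linarith
  have hu : 1 ≤ u := one_le_sqrt_pi_div_two
  have hv_eq : v = u - σ * x := by simp only [x]; field_simp; ring
  have hv_pos : 0 < v := by linarith [(abs_lt.1 hv).1]
  have hσx : |σ * x| < 2 / 5 * (1 - σ) := by rwa [hv_eq, sub_sub_cancel_left, abs_neg] at hv
  have hφ : 1 - x ^ 2 / 2 ≤ 2 * u * gaussPDF x :=
    sqrt_two_mul_pi ▸ one_sub_sq_div_two_le_gaussPDF_mul x
  calc gaussCDF x ≤ 1 / 2 + max x 0 / (2 * u) := sqrt_two_mul_pi ▸ gaussCDF_le_half_add_max x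
    _ = σ * (u + max x 0) / (2 * u * σ) := by field_simp
    _ < (u - σ * x) * (1 - x ^ 2 / 2) / (2 * u * σ) :=
      (div_lt_div_iff_of_pos_right (by positivity)).2 (mul_add_max_lt hu hσ₁ hσ₂ hσx)
    _ ≤ v * (2 * u * gaussPDF x) / (2 * u * σ) := by
      rw [← hv_eq]
      gcongr
    _ = v / σ * gaussPDF x := by field_simp

theorem stmt_19_general (J : ℝ → ℝ → ℝ)
    (hJmax : ∀ σ : ℝ, 0 < σ → ∀ u v : ℝ,
      v * gaussCDF ((u - v) / σ) ≤ J σ u * gaussCDF ((u - J σ u) / σ)) :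
    ∀ σ ∈ Set.Ioo (1 / 2 : ℝ) 1,
      (2 / 5) * (1 - σ) ≤ |J σ (Real.sqrt (Real.pi / 2)) -
        Real.sqrt (Real.pi / 2)| := by
  rintro σ ⟨hσ₁, hσ₂⟩
  set u := √(π / 2)
  have hmax : IsLocalMax (fun w => w * gaussCDF ((u - w) / σ)) (J σ u) :=
    IsMaxOn.isLocalMax (fun v _ => hJmax σ (by linarith) u v) Filter.univ_mem
  have hcrit := hmax.hasDerivAt_eq_zero (hasDerivAt_mul_gaussCDF u σ (J σ u))
  by_contra! hJ
  linarith [gaussCDF_lt_div_mul_gaussPDF hσ₁ hσ₂ hJ]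

/-- With `u* = √(π/2)` and `J σ u` the unique maximizer of
`v ↦ v Φ((u - v)/σ)`, for all `σ ∈ (1/2, 1)`,
`|J σ u* - u*| ≥ (2/5)(1 - σ)`. -/
theorem stmt_19 (J : ℝ → ℝ → ℝ)
    (hJmax : ∀ σ : ℝ, 0 < σ → ∀ u v : ℝ,
      v * gaussCDF ((u - v) / σ) ≤ J σ u * gaussCDF ((u - J σ u) / σ))
    (hJuniq : ∀ σ : ℝ, 0 < σ → ∀ u v : ℝ,
      (∀ w : ℝ, w * gaussCDF ((u - w) / σ) ≤ v * gaussCDF ((u - v) / σ)) →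
        v = J σ u) :
    ∀ σ ∈ Set.Ioo (1 / 2 : ℝ) 1,
      (2 / 5) * (1 - σ) ≤ |J σ (Real.sqrt (Real.pi / 2)) -
        Real.sqrt (Real.pi / 2)| :=
  stmt_19_general J hJmax
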